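/- arXiv:2305.12016 — 4 statements merged into one kernel-verified Lean document; each statement's English description precedes it below -/
import Mathlib

section
/- Let R be a commutative ring with identity, let k ≥ 1, and let c₁,…,c_k ∈ R, and set c_m = 0 for m ≥ k+1. For n ≥ 1, the n-th coefficient b_n of the inverse power series (1 − Σ_{i=1}^{k} c_iX^i)^{-1} ∈ R⟦X⟧ satisfies b_n = (−1)^n det M, where M is the n×n matrix with entries M_{i,j} = −c_{j−i+1} for j ≥ i, M_{i,j} = 1 for j = i−1, and M_{i,j} = 0 for j < i−1 (upper Hessenberg matrix with first row (−c₁, −c₂, …, −c_n), entries 1 on the subdiagonal, and constant values −c_{j−i+1} along each diagonal above it). -/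
/-!
Write `P = 1 - X * A` with `A = ∑ c_{i+1} X^i`; then `P * B = 1` says `b₀ = 1` and
`b_{n+1} = ∑_{i+j=n} c_{i+1} b_j`. Expanding the Hessenberg determinant along its first column
gives the same convolution recurrence for `(-1)^n det M_n`, provided one lets the first row be
arbitrary: deleting the second row leaves a matrix of the same shape whose first row is the old
one shifted by one place.
-/

open Finset PowerSeries

section Hessenberg

variable {R : Type*} [CommRing R] (c : ℕ → R)

def hessenberg (r : ℕ → R) (n : ℕ) : Matrix (Fin n) (Fin n) R :=
  Matrix.of fun i j : Fin n =>
    if (i : ℕ) = 0 then -r j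
    else if (i : ℕ) ≤ j then -c ((j : ℕ) - i + 1)
    else if (j : ℕ) + 1 = i then 1 else 0

theorem det_hessenberg_succ_succ (r : ℕ → R) (n : ℕ) :
    (hessenberg c r (n + 2)).det =
      -r 0 * (hessenberg c (fun j => c (j + 1)) (n + 1)).det
        - (hessenberg c (fun j => r (j + 1)) (n + 1)).det := by
  have minor_zero : (hessenberg c r (n + 2)).submatrix (Fin.succAbove 0) Fin.succ =
      hessenberg c (fun j => c (j + 1)) (n + 1) := by
    ext i j
    simp only [hessenberg, Matrix.submatrix_apply, Matrix.of_apply, Fin.succAbove_zero,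
      Fin.val_succ, Nat.add_one_ne_zero, ↓reduceIte]
    split_ifs <;> first | rfl | omega | (congr 2; omega)
  have minor_one : (hessenberg c r (n + 2)).submatrix (Fin.succAbove 1) Fin.succ =
      hessenberg c (fun j => r (j + 1)) (n + 1) := by
    ext i j
    induction i using Fin.cases <;>
      simp only [hessenberg, Matrix.submatrix_apply, Matrix.of_apply, Fin.one_succAbove_zero,
        Fin.one_succAbove_succ, Fin.val_succ, Fin.val_zero] <;>
      split_ifs <;> first | rfl | omega | (congr 2; omega)
  rw [Matrix.det_succ_column_zero, Fin.sum_univ_succ, Fin.sum_univ_succ,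
    sum_eq_zero fun i _ => by simp [hessenberg], Fin.succ_zero_eq_one, minor_zero, minor_one]
  simp [hessenberg, sub_eq_add_neg]

theorem neg_one_pow_mul_det_hessenberg {b : ℕ → R} (hb0 : b 0 = 1)
    (hb : ∀ n, b (n + 1) = ∑ p ∈ antidiagonal n, c (p.1 + 1) * b p.2) (n : ℕ) (r : ℕ → R) :
    (-1) ^ (n + 1) * (hessenberg c r (n + 1)).det = ∑ p ∈ antidiagonal n, r p.1 * b p.2 := by
  induction n generalizing r with
  | zero => simp [hessenberg, hb0]
  | succ n ih =>
    rw [det_hessenberg_succ_succ, Nat.sum_antidiagonal_succ, hb, ← ih fun j => c (j + 1),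
      ← ih fun j => r (j + 1)]
    ring

theorem of_toeplitz_eq_hessenberg (n : ℕ) :
    (Matrix.of fun i j : Fin n =>
        if (i : ℕ) ≤ j then -c ((j : ℕ) - i + 1) else if (j : ℕ) + 1 = i then 1 else 0) =
      hessenberg c (fun j => c (j + 1)) n := by
  ext i j
  simp only [hessenberg, Matrix.of_apply]
  split_ifs <;> first | rfl | omega | (congr 2; omega)

end Hessenberg

theorem sum_C_mul_X_pow_succ_eq_X_mul_mk {R : Type*} [CommRing R] (k : ℕ) (c : ℕ → R)
    (hc : ∀ m, k + 1 ≤ m → c m = 0) :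
    ∑ i ∈ range k, C (c (i + 1)) * X ^ (i + 1) = X * PowerSeries.mk fun i => c (i + 1) := by
  ext (_ | j)
  · simp
  · rw [coeff_succ_X_mul, coeff_mk, map_sum]
    simp only [coeff_C_mul_X_pow, add_left_inj, sum_ite_eq, mem_range]
    split_ifs with hj
    · rfl
    · exact (hc _ (by omega)).symm

theorem coeff_of_one_sub_X_mul_mul_eq_one {R : Type*} [CommRing R] {A B : R⟦X⟧}
    (h : (1 - X * A) * B = 1) :
    coeff 0 B = 1 ∧ ∀ n, coeff (n + 1) B = ∑ p ∈ antidiagonal n, coeff p.1 A * coeff p.2 B := by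
  have hB : B = 1 + X * (A * B) := by linear_combination h
  refine ⟨?_, fun n => ?_⟩
  · rw [hB]
    simp
  · nth_rw 1 [hB]
    rw [map_add, coeff_succ_X_mul, coeff_one, if_neg n.succ_ne_zero, zero_add, coeff_mul]

theorem coeff_inverse_eq_det_general {R : Type*} [CommRing R] (k : ℕ) (c : ℕ → R)
    (hc : ∀ m, k + 1 ≤ m → c m = 0) (B : PowerSeries R)
    (hB : (1 - ∑ i ∈ Finset.range k, PowerSeries.C (R := R) (c (i + 1)) * PowerSeries.X ^ (i + 1))
      * B = 1)
    (n : ℕ) :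
    PowerSeries.coeff (R := R) n B =
      (-1) ^ n * Matrix.det (Matrix.of fun i j : Fin n =>
        if (i : ℕ) ≤ j then -c ((j : ℕ) - i + 1)
        else if (j : ℕ) + 1 = i then 1 else 0) := by
  rw [sum_C_mul_X_pow_succ_eq_X_mul_mk k c hc] at hB
  obtain ⟨hb0, hb⟩ := coeff_of_one_sub_X_mul_mul_eq_one hB
  simp only [coeff_mk] at hb
  rw [of_toeplitz_eq_hessenberg]
  cases n with
  | zero => simp [hb0]
  | succ n => rw [neg_one_pow_mul_det_hessenberg c (b := fun m => coeff m B) hb0 hb, hb]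

/-- The `n`-th coefficient `b_n` of the inverse power series
`(1 - ∑_{i=1}^k c_i X^i)⁻¹` satisfies `b_n = (-1)^n ⬝ det M`, where `M` is the `n × n`
upper Hessenberg matrix with first row `(-c₁, …, -c_n)`, `1` on the subdiagonal, and
constant values `-c_{j-i+1}` along the diagonals above it (with `c_m = 0` for `m ≥ k+1`). -/
theorem coeff_inverse_eq_det {R : Type*} [CommRing R] (k : ℕ) (hk : 1 ≤ k) (c : ℕ → R)
    (hc : ∀ m, k + 1 ≤ m → c m = 0) (B : PowerSeries R)
    (hB : (1 - ∑ i ∈ Finset.range k, PowerSeries.C (R := R) (c (i + 1)) * PowerSeries.X ^ (i + 1))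
      * B = 1)
    (n : ℕ) (hn : 1 ≤ n) :
    PowerSeries.coeff (R := R) n B =
      (-1) ^ n * Matrix.det (Matrix.of fun i j : Fin n =>
        if (i : ℕ) ≤ j then -c ((j : ℕ) - i + 1)
        else if (j : ℕ) + 1 = i then 1 else 0) :=
  coeff_inverse_eq_det_general k c hc B hB n
end

section
/- Suppose that in ℂ the characteristic polynomial factors as X^k − c₁X^{k−1} − c₂X^{k−2} − ⋯ − c_k = ∏_{i=1}^{k} (X − α_i) with α₁,…,α_k ∈ ℂ. Then for every n ≥ 0, p_{n+k−1} = Σ_{(i₁,…,i_k)∈ℕ^k, i₁+i₂+⋯+i_k = n} α₁^{i₁}α₂^{i₂}⋯α_k^{i_k}. -/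
/-!
The generating function `∑ₘ p (m + k - 1) tᵐ` is the inverse of the reciprocal polynomial
`1 - c₁ t - ⋯ - c_k tᵏ` of `g`, because `p` vanishes below index `k - 1`. Reflecting the
factorisation of `g` turns this polynomial into `∏ᵢ (1 - αᵢ t)`, so the generating function is
the product of the geometric series `∑ₘ αᵢᵐ tᵐ`, whose `n`-th coefficient is the sum in question.
-/

open Finset Polynomial

theorem Finset.piAntidiag_univ_eq_filter_piFinset {ι : Type*} [Fintype ι] [DecidableEq ι]
    (n : ℕ) : piAntidiag univ n =
      (Fintype.piFinset fun _ : ι => range (n + 1)).filter (fun l => ∑ j, l j = n) := by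
  ext l
  simp only [mem_piAntidiag, mem_univ, implies_true, and_true, mem_filter, Fintype.mem_piFinset,
    mem_range, iff_and_self]
  rintro rfl j
  exact Nat.lt_succ_of_le (single_le_sum (fun _ _ => Nat.zero_le _) (mem_univ j))

namespace Polynomial

variable {R ι : Type*}

theorem reflect_sum [Semiring R] (s : Finset ι) (f : ι → R[X]) (N : ℕ) :
    reflect N (∑ i ∈ s, f i) = ∑ i ∈ s, reflect N (f i) :=
  map_sum (⟨⟨reflect N, reflect_zero⟩, fun f g => reflect_add f g N⟩ : R[X] →+ R[X]) f s

theorem reflect_prod [CommSemiring R] (s : Finset ι) (f : ι → R[X]) (N : ι → ℕ)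
    (hf : ∀ i ∈ s, (f i).natDegree ≤ N i) :
    reflect (∑ i ∈ s, N i) (∏ i ∈ s, f i) = ∏ i ∈ s, reflect (N i) (f i) := by
  classical
  induction s using Finset.induction with
  | empty => simp [reflect_one]
  | insert a s ha ih =>
    have hs : ∀ i ∈ s, (f i).natDegree ≤ N i := fun i hi => hf i (mem_insert_of_mem hi)
    rw [sum_insert ha, prod_insert ha, prod_insert ha,
      reflect_mul _ _ (hf a (mem_insert_self a s))
        ((natDegree_prod_le _ _).trans (sum_le_sum hs)), ih hs]

theorem reflect_prod_X_sub_C [CommRing R] (s : Finset ι) (a : ι → R) :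
    reflect #s (∏ i ∈ s, (X - C (a i))) = ∏ i ∈ s, (1 - C (a i) * X) := by
  simpa [reflect_sub, reflect_C] using
    reflect_prod s (fun i => X - C (a i)) (fun _ => 1) fun i _ => natDegree_X_sub_C_le (a i)

theorem reflect_X_pow_sub_sum [CommRing R] (k : ℕ) (c : ℕ → R) :
    reflect k (X ^ k - ∑ i ∈ range k, C (c (i + 1)) * X ^ (k - (i + 1))) =
      1 - ∑ i ∈ range k, C (c (i + 1)) * X ^ (i + 1) := by
  rw [reflect_sub, reflect_sum, reflect_monomial, revAt_le le_rfl, Nat.sub_self, pow_zero]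
  congr 1
  refine sum_congr rfl fun i hi => ?_
  rw [reflect_C_mul_X_pow, revAt_le (Nat.sub_le _ _),
    Nat.sub_sub_self (Nat.succ_le_of_lt (mem_range.mp hi))]

end Polynomial

namespace PowerSeries

variable {R : Type*} [CommRing R]

theorem mk_pow_mul_one_sub_C_mul_X (a : R) : mk (a ^ ·) * (1 - C a * X) = 1 := by
  simpa [rescale_mk, rescale_X] using congrArg (rescale a) (mk_one_mul_one_sub_eq_one R)

theorem coeff_prod_eq_sum_piAntidiag {ι : Type*} [Fintype ι] [DecidableEq ι] (f : ι → R⟦X⟧)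
    (n : ℕ) : coeff n (∏ j, f j) = ∑ l ∈ piAntidiag univ n, ∏ j, coeff (l j) (f j) := by
  rw [coeff_prod, finsuppAntidiag, sum_map]
  exact sum_attach (piAntidiag univ n) fun l => ∏ j, coeff (l j) (f j)

theorem one_sub_sum_mul_mk_eq_one {k : ℕ} (hk : 1 ≤ k) {c p : ℕ → R}
    (hinit : ∀ i < k, p i = if i = k - 1 then 1 else 0)
    (hrec : ∀ n, p (n + k) = ∑ i ∈ range k, c (i + 1) * p (n + k - (i + 1))) :
    (1 - ∑ i ∈ range k, C (c (i + 1)) * X ^ (i + 1)) * mk (fun m => p (m + k - 1)) = 1 := by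
  ext (_ | m)
  · simp [hinit (k - 1) (by omega)]
  · rw [sub_mul, one_mul, sum_mul, map_sub, map_sum, coeff_mk, coeff_one, if_neg m.succ_ne_zero,
      show m + 1 + k - 1 = m + k by omega, hrec m, sub_eq_zero]
    refine sum_congr rfl fun i hi => ?_
    have hik := mem_range.mp hi
    rw [mul_assoc, coeff_C_mul, coeff_X_pow_mul', coeff_mk]
    split_ifs with him
    · congr 2; omega
    · rw [hinit _ (by omega), if_neg (by omega)]

end PowerSeries

/-- If the characteristic polynomial
`X^k - c₁X^{k-1} - ⋯ - c_k` factors over `ℂ` as `∏_{i=1}^k (X - α_i)`, then for every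
`n ≥ 0`, `p_{n+k-1} = ∑_{i₁+i₂+⋯+i_k = n} α₁^{i₁}α₂^{i₂}⋯α_k^{i_k}`. -/
theorem seq_eq_complete_homogeneous_sum (k : ℕ) (hk : 1 ≤ k) (c : ℕ → ℂ) (p : ℕ → ℂ)
    (hinit : ∀ i < k, p i = if i = k - 1 then 1 else 0)
    (hrec : ∀ n, p (n + k) = ∑ i ∈ Finset.range k, c (i + 1) * p (n + k - (i + 1)))
    (α : Fin k → ℂ)
    (hfac : (X : ℂ[X]) ^ k - ∑ i ∈ Finset.range k, C (c (i + 1)) * X ^ (k - (i + 1)) =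
      ∏ j : Fin k, (X - C (α j)))
    (n : ℕ) :
    p (n + k - 1) =
      ∑ i ∈ (Fintype.piFinset fun _ : Fin k => Finset.range (n + 1)).filter
          (fun i => ∑ j : Fin k, i j = n),
        ∏ j : Fin k, α j ^ i j := by
  have hrecip : ∏ j : Fin k, (1 - C (α j) * X) =
      1 - ∑ i ∈ range k, C (c (i + 1)) * X ^ (i + 1) := by
    have h := reflect_prod_X_sub_C univ α
    rw [card_univ, Fintype.card_fin] at h
    rw [← h, ← hfac, reflect_X_pow_sub_sum]
  have hrecip_series : ∏ j : Fin k, (1 - PowerSeries.C (α j) * PowerSeries.X) =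
      1 - ∑ i ∈ range k, PowerSeries.C (c (i + 1)) * PowerSeries.X ^ (i + 1) := by
    simpa only [map_prod, map_sub, map_one, map_sum, map_mul, map_pow,
      coeToPowerSeries.ringHom_apply, coe_C, coe_X] using congrArg coeToPowerSeries.ringHom hrecip
  have hgeo : (∏ j, PowerSeries.mk (α j ^ ·)) *
      ∏ j : Fin k, (1 - PowerSeries.C (α j) * PowerSeries.X) = 1 := by
    rw [← prod_mul_distrib]
    exact prod_eq_one fun j _ => PowerSeries.mk_pow_mul_one_sub_C_mul_X (α j)
  have hgen : PowerSeries.mk (fun m => p (m + k - 1)) = ∏ j, PowerSeries.mk (α j ^ ·) := by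
    have h := PowerSeries.one_sub_sum_mul_mk_eq_one hk hinit hrec
    rw [← hrecip_series] at h
    exact (left_inv_eq_right_inv hgeo h).symm
  rw [← PowerSeries.coeff_mk n (fun m => p (m + k - 1)), hgen,
    PowerSeries.coeff_prod_eq_sum_piAntidiag, piAntidiag_univ_eq_filter_piFinset]
  simp only [PowerSeries.coeff_mk]
end

section
/- For every n ≥ 1, L_{2n} = F_{n+1}² + 2q₂·F_n² + q₂²·F_{n−1}². -/
/-- For every `n ≥ 1`, `L_{2n} = F_{n+1}² + 2q₂·F_n² + q₂²·F_{n-1}²`. -/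
theorem lucas_two_mul_eq_sq_sum {R : Type*} [CommRing R] (q₁ q₂ : R)
    (F : ℕ → R) (hF0 : F 0 = 0) (hF1 : F 1 = 1)
    (hF : ∀ n, F (n + 2) = q₁ * F (n + 1) + q₂ * F n)
    (L : ℕ → R) (hL0 : L 0 = 2) (hL1 : L 1 = q₁)
    (hL : ∀ n, L (n + 2) = q₁ * L (n + 1) + q₂ * L n)
    (n : ℕ) (hn : 1 ≤ n) :
    L (2 * n) = F (n + 1) ^ 2 + 2 * q₂ * F n ^ 2 + q₂ ^ 2 * F (n - 1) ^ 2 := by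
  -- addition formula
  have add : ∀ m k, F (m + k + 1) = F (m + 1) * F (k + 1) + q₂ * F m * F k := by
    have key : ∀ m, (∀ k, F (m + k + 1) = F (m + 1) * F (k + 1) + q₂ * F m * F k) ∧
        (∀ k, F (m + 1 + k + 1) = F (m + 2) * F (k + 1) + q₂ * F (m + 1) * F k) := by
      intro m
      induction m with
      | zero =>
        constructor
        · intro k; simp [hF0, hF1]
        · intro k
          have : (1 : ℕ) + k + 1 = k + 2 := by ring
          rw [this, hF k, hF 0, hF0, hF1]; ring
      | succ m ih =>
        refine ⟨ih.2, fun k => ?_⟩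
        have e1 : m + 1 + 1 + k + 1 = (m + k + 1) + 2 := by ring
        have e2 : m + 1 + k + 1 = (m + k + 1) + 1 := by ring
        have h2 := ih.2 k
        rw [e2] at h2
        have e3 : m + 1 + 2 = m + 3 := by ring
        have e4 : m + 1 + 1 = m + 2 := by ring
        rw [e1, hF (m + k + 1), h2, ih.1 k, e3, e4, show m + 3 = (m+1)+2 from rfl,
          hF (m + 1), hF m]
        ring
    exact fun m => (key m).1
  -- L(m+1) = F(m+2) + q₂ F m
  have lf : ∀ m, L (m + 1) = F (m + 2) + q₂ * F m := by
    have key : ∀ m, L (m + 1) = F (m + 2) + q₂ * F m ∧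
        L (m + 2) = F (m + 3) + q₂ * F (m + 1) := by
      intro m
      induction m with
      | zero =>
        constructor
        · rw [hL1, hF 0, hF0, hF1]; ring
        · rw [hL 0, hL0, hL1, hF 1, hF 0, hF0, hF1]; ring
      | succ m ih =>
        refine ⟨ih.2, ?_⟩
        rw [hL (m + 1), ih.2, ih.1, hF (m + 2), hF m]
        ring
    exact fun m => (key m).1
  obtain ⟨k, rfl⟩ := Nat.exists_eq_add_of_le hn
  have e : 2 * (1 + k) = (2 * k + 1) + 1 := by ring
  rw [e, lf (2 * k + 1)]
  have e1 : 2 * k + 1 + 2 = (k + 1) + (k + 1) + 1 := by ring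
  have e2 : 2 * k + 1 = k + k + 1 := by ring
  rw [e1, add (k + 1) (k + 1), e2, add k k]
  have e3 : 1 + k + 1 = k + 2 := by ring
  have e4 : 1 + k = k + 1 := by ring
  rw [e3, e4, Nat.add_sub_cancel]
  ring
end

section
/- For every n ≥ 1, L_n = Σ_{i=0}^{⌊n/2⌋} (2·C(n−i, i) − C(n−i−1, i)) · q₁^{n−2i} · q₂^{i}, where C(·,·) denotes binomial coefficients (regarded as elements of R via the natural map ℕ → R); the integer coefficient 2·C(n−i,i) − C(n−i−1,i) equals (n/(n−i))·C(n−i,i). -/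
private def cc (n i : ℕ) : ℕ := 2 * (n - i).choose i - (n - i - 1).choose i

private lemma cc_zero (n : ℕ) : cc n 0 = 1 := by simp [cc]

private lemma cc_eq_zero {n i : ℕ} (h : n < 2 * i) : cc n i = 0 := by
  have h1 : n - i < i := by omega
  have h2 : n - i - 1 < i := by omega
  simp [cc, Nat.choose_eq_zero_of_lt h1, Nat.choose_eq_zero_of_lt h2]

private lemma cc_diag {k : ℕ} (hk : 1 ≤ k) : cc (2 * k) k = 2 := by
  have e1 : 2 * k - k = k := by omega
  have e2 : 2 * k - k - 1 = k - 1 := by omega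
  have h : k - 1 < k := by omega
  simp [cc, e1, e2, Nat.choose_self, Nat.choose_eq_zero_of_lt h]

private lemma cc_rec (n i : ℕ) (h : i < n) :
    cc (n + 2) (i + 1) = cc (n + 1) (i + 1) + cc n i := by
  unfold cc
  obtain ⟨a, ha⟩ : ∃ a, n - i - 1 = a := ⟨n - i - 1, rfl⟩
  have e3 : n + 2 - (i + 1) - 1 = a + 1 := by omega
  have e4 : n + 1 - (i + 1) - 1 = a := by omega
  have e1 : n + 2 - (i + 1) = a + 2 := by omega
  have e2 : n + 1 - (i + 1) = a + 1 := by omega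
  have e5 : n - i = a + 1 := by omega
  rw [e3, e4, ha, e1, e2, e5]
  have p1 := Nat.choose_succ_succ (a + 1) i
  have p2 := Nat.choose_succ_succ a i
  simp only [Nat.succ_eq_add_one, show a + 1 + 1 = a + 2 from rfl] at p1 p2
  have m1 : a.choose (i + 1) ≤ (a + 1).choose (i + 1) :=
    Nat.choose_le_choose _ (by omega)
  have m2 : a.choose i ≤ (a + 1).choose i :=
    Nat.choose_le_choose _ (by omega)
  omega

section

variable {R : Type*} [CommRing R] (q₁ q₂ : R)

private lemma term_eq (n i : ℕ) (hn : 1 ≤ n) :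
    (cc (n + 2) (i + 1) : R) * q₁ ^ (n + 2 - 2 * (i + 1)) * q₂ ^ (i + 1)
      = q₁ * ((cc (n + 1) (i + 1) : R) * q₁ ^ (n + 1 - 2 * (i + 1)) * q₂ ^ (i + 1))
      + q₂ * ((cc n i : R) * q₁ ^ (n - 2 * i) * q₂ ^ i) := by
  rcases lt_trichotomy (2 * i) n with h | h | h
  · -- generic case: 2*i < n
    rw [cc_rec n i (by omega), Nat.cast_add]
    have e1 : n + 2 - 2 * (i + 1) = n - 2 * i := by omega
    have e2 : n - 2 * i = (n + 1 - 2 * (i + 1)) + 1 := by omega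
    rw [e1, e2, pow_succ]
    ring
  · -- diagonal case: 2*i = n
    have hi : 1 ≤ i := by omega
    have h2 : cc (n + 1) (i + 1) = 0 := cc_eq_zero (by omega)
    have h3 : cc (n + 2) (i + 1) = 2 := by
      have : n + 2 = 2 * (i + 1) := by omega
      rw [this]; exact cc_diag (by omega)
    have h4 : cc n i = 2 := by
      have : n = 2 * i := by omega
      rw [this]; exact cc_diag hi
    have e1 : n + 2 - 2 * (i + 1) = 0 := by omega
    have e2 : n - 2 * i = 0 := by omega
    rw [h2, h3, h4, e1, e2]
    push_cast
    ring
  · -- vanishing case: 2*i > n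
    have h1 : cc (n + 2) (i + 1) = 0 := cc_eq_zero (by omega)
    have h2 : cc (n + 1) (i + 1) = 0 := cc_eq_zero (by omega)
    have h3 : cc n i = 0 := cc_eq_zero (by omega)
    rw [h1, h2, h3]
    push_cast
    ring

private lemma sum_ext (m N : ℕ) (hN : m / 2 + 1 ≤ N) :
    ∑ i ∈ Finset.range (m / 2 + 1), (cc m i : R) * q₁ ^ (m - 2 * i) * q₂ ^ i
      = ∑ i ∈ Finset.range N, (cc m i : R) * q₁ ^ (m - 2 * i) * q₂ ^ i := by
  apply Finset.sum_subset (Finset.range_subset_range.mpr hN)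
  intro i _ hi
  have h : cc m i = 0 := by
    apply cc_eq_zero
    simp only [Finset.mem_range] at hi
    omega
  simp [h]

private lemma step (n : ℕ) (hn : 1 ≤ n) :
    ∑ i ∈ Finset.range ((n + 2) / 2 + 1), (cc (n + 2) i : R) * q₁ ^ (n + 2 - 2 * i) * q₂ ^ i
      = q₁ * ∑ i ∈ Finset.range ((n + 1) / 2 + 1), (cc (n + 1) i : R) * q₁ ^ (n + 1 - 2 * i) * q₂ ^ i
      + q₂ * ∑ i ∈ Finset.range (n / 2 + 1), (cc n i : R) * q₁ ^ (n - 2 * i) * q₂ ^ i := by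
  have e0 : (n + 2) / 2 + 1 = n / 2 + 2 := by omega
  rw [e0, sum_ext q₁ q₂ (n + 1) (n / 2 + 2) (by omega)]
  rw [Finset.sum_range_succ' _ (n / 2 + 1), Finset.sum_range_succ' (fun i => (cc (n+1) i : R) * q₁ ^ (n + 1 - 2 * i) * q₂ ^ i) (n / 2 + 1)]
  simp only [cc_zero, Nat.cast_one, one_mul, pow_zero, mul_one, Nat.sub_zero, Nat.mul_zero]
  rw [Finset.sum_congr rfl (fun i _ => term_eq q₁ q₂ n i hn), Finset.sum_add_distrib,
    ← Finset.mul_sum, ← Finset.mul_sum]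
  ring

end

/-- For every `n ≥ 1`,
`L_n = ∑_{i=0}^{⌊n/2⌋} (2·C(n-i, i) - C(n-i-1, i)) · q₁^{n-2i} · q₂^i`,
where the integer coefficient `2·C(n-i,i) - C(n-i-1,i)` equals `(n/(n-i))·C(n-i,i)`. -/
theorem lucas_explicit_formula {R : Type*} [CommRing R] (q₁ q₂ : R)
    (L : ℕ → R) (hL0 : L 0 = 2) (hL1 : L 1 = q₁)
    (hL : ∀ n, L (n + 2) = q₁ * L (n + 1) + q₂ * L n)
    (n : ℕ) (hn : 1 ≤ n) :
    L n = ∑ i ∈ Finset.range (n / 2 + 1),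
      ((2 * (n - i).choose i - (n - i - 1).choose i : ℕ) : R) * q₁ ^ (n - 2 * i) * q₂ ^ i := by
  have key : ∀ m, 1 ≤ m → L m = ∑ i ∈ Finset.range (m / 2 + 1),
      (cc m i : R) * q₁ ^ (m - 2 * i) * q₂ ^ i := by
    intro m
    induction m using Nat.strong_induction_on with
    | _ m ih =>
      intro hm
      match m, hm with
      | 1, _ =>
        simp [Finset.sum_range_one, cc_zero, hL1]
      | 2, _ =>
        have h2 : L 2 = q₁ * q₁ + q₂ * 2 := by
          have := hL 0; rw [hL0, hL1] at this; exact this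
        rw [h2]
        rw [Finset.sum_range_succ, Finset.sum_range_one]
        have hc1 : cc 2 1 = 2 := cc_diag (k := 1) le_rfl
        simp [cc_zero, hc1]
        ring
      | (k + 3), _ =>
        rw [show k + 3 = (k + 1) + 2 from rfl, hL (k + 1),
          ih (k + 2) (by omega) (by omega), ih (k + 1) (by omega) (by omega)]
        exact (step q₁ q₂ (k + 1) (by omega)).symm
  exact key n hn
end
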